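/- Let k be an algebraically closed field and ℓ ⊆ k an algebraically closed subfield with k of infinite transcendence degree over ℓ. Suppose {C_i}_{i∈ℕ} is a countable family of constructible subsets of the affine line 𝔸¹_k = Spec k[T] such that each C_i is the base change to k of a constructible subset C_i^ℓ ⊆ 𝔸¹_ℓ, and such that every k-point of 𝔸¹_k lies in some C_i. Then some C_i is dense in 𝔸¹_k. -/

import Mathlib

open AlgebraicGeometry CategoryTheory Limits

noncomputable section

namespace FG

/-- The base scheme `Spec k` attached to a field `k`. -/
abbrev 𝕊 (k : Type) [Field k] : Scheme := Spec (CommRingCat.of k)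

/-- A field has infinite transcendence degree over its prime field iff it contains a countably
infinite family which is algebraically independent over `ℤ` (equivalently, over the prime
field). -/
def InfiniteTrdegOverPrimeField (k : Type) [Field k] : Prop :=
  ∃ f : ℕ → k, AlgebraicIndependent ℤ f

attribute [local instance] MvPolynomial.gradedAlgebra

/-- Projective `n`-space over `Spec ℤ`, as `Proj ℤ[x₀,…,xₙ]`. -/
def ProjectiveSpaceZ (n : ℕ) : Scheme :=
  Proj (MvPolynomial.homogeneousSubmodule (Fin (n + 1)) ℤ)

/-- The canonical morphism to the terminal scheme `Spec ℤ`. -/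
def toSpecZ (X : Scheme) : X ⟶ Spec (CommRingCat.of ℤ) := specZIsTerminal.from X

/-- Relative projective `n`-space over a scheme `S`. -/
def ProjectiveSpaceOver (n : ℕ) (S : Scheme) : Scheme :=
  pullback (toSpecZ (ProjectiveSpaceZ n)) (toSpecZ S)

/-- The structure morphism `ℙⁿ_S ⟶ S`. -/
def projectiveSpaceProj (n : ℕ) (S : Scheme) : ProjectiveSpaceOver n S ⟶ S :=
  pullback.snd (toSpecZ (ProjectiveSpaceZ n)) (toSpecZ S)

/-- `f : 𝒳 ⟶ S` is a projective morphism: it factors as a closed immersion into some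
relative projective space `ℙⁿ_S` followed by the projection to `S`. -/
def IsProjectiveFamily {𝒳 S : Scheme} (f : 𝒳 ⟶ S) : Prop :=
  ∃ (n : ℕ) (i : 𝒳 ⟶ ProjectiveSpaceOver n S),
    IsClosedImmersion i ∧ i ≫ projectiveSpaceProj n S = f

/-- The family `g : 𝒴 ⟶ T` is (globally) trivial with fibre `X/k`, i.e. isomorphic over `T`
to the projection `X ×ₖ T ⟶ T`; here `τ : T ⟶ 𝕊 k` is the structure morphism of `T`. -/
def IsTrivialFamilyWithFibre {k : Type} [Field k] {X T 𝒴 : Scheme}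
    (πX : X ⟶ 𝕊 k) (τ : T ⟶ 𝕊 k) (g : 𝒴 ⟶ T) : Prop :=
  ∃ e : 𝒴 ≅ pullback πX τ, e.hom ≫ pullback.snd πX τ = g

/-- `f : 𝒳 ⟶ S` is fibrewise trivial with fibre `X`: for every `k`-point `s` of `S`, the fibre
`𝒳ₛ` is isomorphic to `X` over `k`. -/
def FibrewiseTrivial {k : Type} [Field k] {X 𝒳 S : Scheme}
    (πX : X ⟶ 𝕊 k) (πS : S ⟶ 𝕊 k) (f : 𝒳 ⟶ S) : Prop :=
  ∀ s : 𝕊 k ⟶ S, s ≫ πS = 𝟙 (𝕊 k) →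
    ∃ e : pullback f s ≅ X, e.hom ≫ πX = pullback.snd f s

/-- `f : 𝒳 ⟶ S` is isotrivial at the `k`-point `s` of `S` (with fibre `X/k`): there is an étale
neighbourhood `V ⟶ S` of `s` over which the family becomes trivial. -/
def IsotrivialAt {k : Type} [Field k] {X 𝒳 S : Scheme} (πX : X ⟶ 𝕊 k) (πS : S ⟶ 𝕊 k)
    (f : 𝒳 ⟶ S) (s : 𝕊 k ⟶ S) : Prop :=
  ∃ (V : Scheme) (g : V ⟶ S) (_ : IsEtale g) (v : 𝕊 k ⟶ V), v ≫ g = s ∧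
    IsTrivialFamilyWithFibre πX (g ≫ πS) (pullback.snd f g)

/-- Spec of the ring of dual numbers over `A`. -/
def specDN (A : Type) [CommRing A] : Scheme := Spec (CommRingCat.of (DualNumber A))

/-- The closed immersion `Spec A ⟶ Spec A[ε]`. -/
def dnPt (A : Type) [CommRing A] : Spec (CommRingCat.of A) ⟶ specDN A :=
  Spec.map (CommRingCat.ofHom (TrivSqZeroExt.fstHom A A A).toRingHom)

/-- The retraction `Spec A[ε] ⟶ Spec A`. -/
def dnRetr (A : Type) [CommRing A] : specDN A ⟶ Spec (CommRingCat.of A) :=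
  Spec.map (CommRingCat.ofHom (algebraMap A (DualNumber A)))

/-- The constant tangent vector with the same centre as `v`. -/
def constTangent {A : Type} [CommRing A] {S : Scheme} (v : specDN A ⟶ S) : specDN A ⟶ S :=
  dnRetr A ≫ dnPt A ≫ v

/-- Vanishing of the Kodaira–Spencer map `KS_f : 𝒯_{S/k} ⟶ R¹f⁎𝒯_{𝒳/S}` of `f` over `k`,
expressed in terms of first order deformations: for every tangent vector
`v : Spec A[ε] ⟶ S` over `k`, the induced first-order deformation of the family is trivial,
i.e. the pullback of `f` along `v` is isomorphic to the pullback along the constant tangent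
vector with the same centre. -/
def KodairaSpencerVanishes {k : Type} [Field k] {𝒳 S : Scheme} (f : 𝒳 ⟶ S)
    (πS : S ⟶ 𝕊 k) : Prop :=
  ∀ (A : Type) (_ : CommRing A) (v : specDN A ⟶ S),
    v ≫ πS = constTangent v ≫ πS →
    ∃ e : pullback f v ≅ pullback f (constTangent v),
      e.hom ≫ pullback.snd f (constTangent v) = pullback.snd f v

/-- The unique point of `Spec k` for a field `k`. -/
def specPt (k : Type) [Field k] : 𝕊 k := (⟨⊥, Ideal.bot_prime⟩ : PrimeSpectrum k)

/-- The `n`-th infinitesimal neighbourhood `Sₙ = Spec (𝒪_{S,s}/𝔪ₛⁿ⁺¹)` of a `k`-point `s`. -/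
def infinNbhd {k : Type} [Field k] {S : Scheme} (s : 𝕊 k ⟶ S) (n : ℕ) : Scheme :=
  Spec (CommRingCat.of ((S.presheaf.stalk (s.base (specPt k))) ⧸
    (IsLocalRing.maximalIdeal (S.presheaf.stalk (s.base (specPt k)))) ^ (n + 1)))

/-- The canonical morphism `Sₙ ⟶ S`. -/
def infinNbhdIncl {k : Type} [Field k] {S : Scheme} (s : 𝕊 k ⟶ S) (n : ℕ) :
    infinNbhd s n ⟶ S :=
  Spec.map (CommRingCat.ofHom (Ideal.Quotient.mk _)) ≫ S.fromSpecStalk _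

/-- `f : 𝒳 ⟶ S` is formally trivial at the `k`-point `s`, with fibre `X/k`: for every `n`, the
deformation `𝒳 ×_S Sₙ ⟶ Sₙ` is trivial with fibre `X`. -/
def FormallyTrivialAt {k : Type} [Field k] {X 𝒳 S : Scheme} (πX : X ⟶ 𝕊 k) (πS : S ⟶ 𝕊 k)
    (f : 𝒳 ⟶ S) (s : 𝕊 k ⟶ S) : Prop :=
  ∀ n : ℕ,
    IsTrivialFamilyWithFibre πX (infinNbhdIncl s n ≫ πS) (pullback.snd f (infinNbhdIncl s n))

/-- A ring homomorphism is flat if it turns the target into a flat module over the source. -/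
def RingHomFlat {R S : Type} [CommRing R] [CommRing S] (φ : R →+* S) : Prop :=
  letI := φ.toAlgebra
  Module.Flat R S

/-- A morphism of schemes is flat if all of its stalk maps are flat. -/
def Flat {X Y : Scheme} (f : X ⟶ Y) : Prop :=
  ∀ x : X, RingHomFlat (f.stalkMap x).hom

/-- The scheme `(A, pA)` together with the universal automorphism `Ω` represents the
automorphism functor `T ↦ Aut_T (X ×ₖ T)` of the `k`-scheme `X`; i.e. `A = Aut^X_k`. -/
structure RepresentsAut {k : Type} [Field k] {X A : Scheme} (πX : X ⟶ 𝕊 k) (pA : A ⟶ 𝕊 k)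
    (Ω : pullback πX pA ⟶ pullback πX pA) : Prop where
  isOver : Ω ≫ pullback.snd πX pA = pullback.snd πX pA
  isIso : IsIso Ω
  universal : ∀ (T : Scheme) (τ : T ⟶ 𝕊 k) (θ : pullback πX τ ⟶ pullback πX τ),
    θ ≫ pullback.snd πX τ = pullback.snd πX τ → IsIso θ →
    ∃! σ : { σ : T ⟶ A // σ ≫ pA = τ },
      θ ≫ pullback.map πX τ πX pA (𝟙 X) σ.1 (𝟙 (𝕊 k)) (by simp)
          (by rw [Category.comp_id, σ.2]) =
        pullback.map πX τ πX pA (𝟙 X) σ.1 (𝟙 (𝕊 k)) (by simp)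
          (by rw [Category.comp_id, σ.2]) ≫ Ω

/-- The `S`-scheme `(I, pI)` together with the universal isomorphism `Ω` represents the
functor `T ↦ Isom_T (𝒳 ×_S T, X ×ₖ T)` of isomorphisms from `𝒳/S` to the constant family
with fibre `X/k`; i.e. `I = Isom_S^{𝒳, X ×ₖ S}`. -/
structure RepresentsIsomToConst {k : Type} [Field k] {X 𝒳 S I : Scheme}
    (f : 𝒳 ⟶ S) (πX : X ⟶ 𝕊 k) (πS : S ⟶ 𝕊 k) (pI : I ⟶ S)
    (Ω : pullback f pI ⟶ pullback πX (pI ≫ πS)) : Prop where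
  isOver : Ω ≫ pullback.snd πX (pI ≫ πS) = pullback.snd f pI
  isIso : IsIso Ω
  universal : ∀ (T : Scheme) (t : T ⟶ S) (θ : pullback f t ⟶ pullback πX (t ≫ πS)),
    θ ≫ pullback.snd πX (t ≫ πS) = pullback.snd f t → IsIso θ →
    ∃! h : { h : T ⟶ I // h ≫ pI = t },
      pullback.map f t f pI (𝟙 𝒳) h.1 (𝟙 S) (by simp) (by rw [Category.comp_id, h.2]) ≫ Ω =
        θ ≫ pullback.map πX (t ≫ πS) πX (pI ≫ πS) (𝟙 X) h.1 (𝟙 (𝕊 k)) (by simp)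
          (by rw [Category.comp_id, ← Category.assoc, h.2])


/-- A constructible subset of a topological space: a finite union of intersections of an open
and a closed subset. -/
def IsConstructibleSet {α : Type} [TopologicalSpace α] (C : Set α) : Prop :=
  ∃ (n : ℕ) (U Z : Fin n → Set α),
    (∀ i, IsOpen (U i)) ∧ (∀ i, IsClosed (Z i)) ∧ C = ⋃ i, U i ∩ Z i

/-- A subfield `ℓ ⊆ k` has finite transcendence degree over the prime field iff for some `n`
there is no algebraically independent `n`-tuple in `ℓ` over `ℤ` (equivalently, over the prime
field). -/
def FiniteTrdegOverPrimeField (k : Type) [Field k] (ℓ : Subfield k) : Prop :=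
  ∃ n : ℕ, ∀ g : Fin n → ℓ, ¬ AlgebraicIndependent ℤ g

end FG

/-!
Choose `a ∈ k` transcendental over `ℓ`. The `k`-point `T = a` of `𝔸¹ₖ` lies in some `Cᵢ`, and
its image in `𝔸¹_ℓ` is the generic point, since the kernel of `ℓ[T] → k, T ↦ a` is zero. The
generic point of `𝔸¹ₖ` has the same image, so it lies in `Cᵢ = (base change)⁻¹ Cℓᵢ`, and a set
containing the generic point is dense.
-/

open AlgebraicGeometry CategoryTheory Polynomial

namespace PrimeSpectrum

variable {R S : Type*} [CommRing R] [CommRing S]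

theorem dense_singleton_bot [IsDomain R] : Dense {(⊥ : PrimeSpectrum R)} := by
  simp [dense_iff_closure_eq, closure_singleton]

theorem comap_bot_of_injective [IsDomain R] [IsDomain S] {f : R →+* S}
    (hf : Function.Injective f) : comap f ⊥ = ⊥ :=
  PrimeSpectrum.ext (Ideal.comap_bot_of_injective f hf)

end PrimeSpectrum

theorem Transcendental.injective_evalRingHom_comp_mapRingHom {R A : Type*} [CommRing R]
    [CommRing A] [Algebra R A] {a : A} (ha : Transcendental R a) :
    Function.Injective ((evalRingHom a).comp (mapRingHom (algebraMap R A))) := by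
  have h : (evalRingHom a).comp (mapRingHom (algebraMap R A)) = (Polynomial.aeval a).toRingHom := by
    ext <;> simp
  rw [h]
  exact transcendental_iff_injective.mp ha

theorem AlgebraicGeometry.Spec.map_evalRingHom_comp_map_C {R : Type} [CommRing R] (a : R) :
    Spec.map (CommRingCat.ofHom (evalRingHom a)) ≫ Spec.map (CommRingCat.ofHom (C : R →+* R[X])) =
      𝟙 _ := by
  rw [← Spec.map_comp, ← Spec.map_id]
  congr 1
  ext x
  simp

namespace FG

theorem exists_dense_of_countable_constructible_cover_affine_line_general
    (k : Type) [Field k]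
    (ℓ : Type) [Field ℓ] [Algebra ℓ k]
    (htr : ∃ g : ℕ → k, AlgebraicIndependent ℓ g)
    (C : ℕ → Set (Spec (CommRingCat.of (Polynomial k)) : Scheme))
    (Cℓ : ℕ → Set (Spec (CommRingCat.of (Polynomial ℓ)) : Scheme))
    (hbc : ∀ i, C i =
      (Spec.map (CommRingCat.ofHom (Polynomial.mapRingHom (algebraMap ℓ k)))).base ⁻¹' (Cℓ i))
    (hcover : ∀ s : 𝕊 k ⟶ Spec (CommRingCat.of (Polynomial k)),
      s ≫ Spec.map (CommRingCat.ofHom (Polynomial.C : k →+* Polynomial k)) = 𝟙 (𝕊 k) →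
      ∃ i, Set.range s.base ⊆ C i) :
    ∃ i, Dense (C i) := by
  obtain ⟨g, hg⟩ := htr
  have ha : Transcendental ℓ (g 0) := hg.transcendental 0
  set ev := Spec.map (CommRingCat.ofHom (evalRingHom (g 0)))
  set φ := Spec.map (CommRingCat.ofHom (mapRingHom (algebraMap ℓ k)))
  obtain ⟨i, hi⟩ := hcover ev (Spec.map_evalRingHom_comp_map_C (g 0))
  set η : Spec (CommRingCat.of k[X]) := (⊥ : PrimeSpectrum k[X])
  have hsame_image : φ.base η = φ.base (ev.base (specPt k)) := by
    change PrimeSpectrum.comap (mapRingHom (algebraMap ℓ k)) ⊥ =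
      PrimeSpectrum.comap (mapRingHom (algebraMap ℓ k)) (PrimeSpectrum.comap (evalRingHom (g 0)) ⊥)
    rw [← PrimeSpectrum.comap_comp_apply,
      PrimeSpectrum.comap_bot_of_injective ha.injective_evalRingHom_comp_mapRingHom]
    exact PrimeSpectrum.comap_bot_of_injective (map_injective _ (algebraMap ℓ k).injective)
  have hgeneric : η ∈ C i := by
    have hpoint := hi ⟨specPt k, rfl⟩
    rw [hbc i] at hpoint ⊢
    change φ.base η ∈ Cℓ i
    rwa [hsame_image]
  exact ⟨i, PrimeSpectrum.dense_singleton_bot.mono (Set.singleton_subset_iff.2 hgeneric)⟩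

/-- **Step 1 of Proposition 3.1: the affine line.**
Let `ℓ ⊆ k` be algebraically closed fields with `k` of infinite transcendence degree over `ℓ`.
If `{Cᵢ}` is a countable family of constructible subsets of `𝔸¹ₖ = Spec k[T]`, each the base
change of a constructible subset `Cℓ i ⊆ 𝔸¹_ℓ`, and the `Cᵢ` cover all `k`-points of `𝔸¹ₖ`,
then some `Cᵢ` is dense in `𝔸¹ₖ`. -/
theorem exists_dense_of_countable_constructible_cover_affine_line
    (k : Type) [Field k] [IsAlgClosed k]
    (ℓ : Type) [Field ℓ] [IsAlgClosed ℓ] [Algebra ℓ k]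
    (htr : ∃ g : ℕ → k, AlgebraicIndependent ℓ g)
    (C : ℕ → Set (Spec (CommRingCat.of (Polynomial k)) : Scheme))
    (hC : ∀ i, IsConstructibleSet (C i))
    (Cℓ : ℕ → Set (Spec (CommRingCat.of (Polynomial ℓ)) : Scheme))
    (hCℓ : ∀ i, IsConstructibleSet (Cℓ i))
    (hbc : ∀ i, C i =
      (Spec.map (CommRingCat.ofHom (Polynomial.mapRingHom (algebraMap ℓ k)))).base ⁻¹' (Cℓ i))
    (hcover : ∀ s : 𝕊 k ⟶ Spec (CommRingCat.of (Polynomial k)),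
      s ≫ Spec.map (CommRingCat.ofHom (Polynomial.C : k →+* Polynomial k)) = 𝟙 (𝕊 k) →
      ∃ i, Set.range s.base ⊆ C i) :
    ∃ i, Dense (C i) :=
  exists_dense_of_countable_constructible_cover_affine_line_general k ℓ htr C Cℓ hbc hcover

end FG
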